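/- arXiv:0804.4508 — 5 statements merged into one kernel-verified Lean document; each statement's English description precedes it below -/
import Mathlib

section
/- Let θ be a Cantor series such that every prime divides infinitely many of the b_n. Then θ is irrational if and only if both a_n > 0 holds for infinitely many n and a_n < b_n − 1 holds for infinitely many n. -/
/-!
Write `θ = θ_N + t_N`, where `θ_N` is the `N`-th partial sum and `t_N` the tail, and put
`P_N = b₁ ⋯ b_N`. Then `P_N θ_N` is an integer, and `t_N` is dominated termwise by the
telescoping series `∑_{n ≥ N} (1/P_n - 1/P_{n+1}) = 1/P_N`, so `0 ≤ P_N t_N ≤ 1`, with equality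
on the left iff all digits after `N` vanish and on the right iff they are all maximal.
If some tail sits at an endpoint, `θ` is a fraction with denominator `P_N`. Conversely, if
`θ = p/q`, then `q ∣ P_N` for some `N` because every prime divides infinitely many `b_n`, so
`P_N t_N` is an integer in `[0, 1]`, hence an endpoint.
-/

open Filter Topology Finset

lemma hasSum_sub_succ_of_antitone {f : ℕ → ℝ} (hf : Antitone f)
    (h : Tendsto f atTop (𝓝 0)) : HasSum (fun n ↦ f n - f (n + 1)) (f 0) := by
  rw [hasSum_iff_tendsto_nat_of_nonneg (fun n ↦ sub_nonneg.2 (hf n.le_succ))]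
  simp_rw [sum_range_sub']
  simpa using h.const_sub (f 0)

lemma HasSum.pos_iff_exists_pos {ι : Type*} {f : ι → ℝ} {s : ℝ} (hf : HasSum f s)
    (h0 : ∀ i, 0 ≤ f i) : 0 < s ↔ ∃ i, 0 < f i := by
  refine ⟨fun hs ↦ ?_, fun ⟨i, hi⟩ ↦ hasSum_lt h0 hi hasSum_zero hf⟩
  by_contra! h
  have : f = 0 := funext fun i ↦ le_antisymm (h i) (h0 i)
  subst this
  exact hs.ne (hasSum_zero.unique hf)

lemma Nat.infinite_setOf_one_le_and_iff {P : ℕ → Prop} :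
    {n | 1 ≤ n ∧ P n}.Infinite ↔ ∀ N, ∃ m, P (m + N + 1) := by
  refine Set.infinite_iff_exists_gt.trans (forall_congr' fun N ↦ ⟨?_, fun ⟨m, hm⟩ ↦ ?_⟩)
  · rintro ⟨n, ⟨-, hn⟩, hNn⟩
    obtain ⟨m, rfl⟩ := Nat.exists_eq_add_of_lt hNn
    exact ⟨m, by rwa [add_comm m]⟩
  · exact ⟨m + N + 1, ⟨by omega, hm⟩, by omega⟩

namespace CantorSeries

variable {a b : ℕ → ℤ}

def denom (b : ℕ → ℤ) (n : ℕ) : ℤ := ∏ i ∈ range n, b (i + 1)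

noncomputable def term (a b : ℕ → ℤ) (n : ℕ) : ℝ := a (n + 1) / denom b (n + 1)

noncomputable def partialSum (a b : ℕ → ℤ) (N : ℕ) : ℝ := a 0 + ∑ n ∈ range N, term a b n

noncomputable def tail (a b : ℕ → ℤ) (N : ℕ) : ℝ := ∑' m, term a b (m + N)

lemma denom_succ (b : ℕ → ℤ) (n : ℕ) : denom b (n + 1) = denom b n * b (n + 1) :=
  prod_range_succ _ _

lemma denom_dvd_denom (b : ℕ → ℤ) {m n : ℕ} (hmn : m ≤ n) : denom b m ∣ denom b n :=
  prod_dvd_prod_of_subset _ _ _ (range_subset_range.2 hmn)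

lemma two_pow_le_denom (hb : ∀ n, 1 ≤ n → 2 ≤ b n) (n : ℕ) : 2 ^ n ≤ denom b n := by
  induction n with
  | zero => simp [denom]
  | succ n ih =>
    rw [denom_succ, pow_succ]
    exact mul_le_mul ih (hb _ n.succ_pos) zero_le_two ((pow_pos two_pos n).le.trans ih)

lemma denom_pos (hb : ∀ n, 1 ≤ n → 2 ≤ b n) (n : ℕ) : (0 : ℝ) < denom b n := by
  exact_mod_cast (pow_pos two_pos n).trans_le (two_pow_le_denom hb n)

lemma denom_mono (hb : ∀ n, 1 ≤ n → 2 ≤ b n) : Monotone fun n ↦ (denom b n : ℝ) :=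
  monotone_nat_of_le_succ fun n ↦ by
    have hbn : (2 : ℝ) ≤ b (n + 1) := by exact_mod_cast hb (n + 1) n.succ_pos
    have := denom_pos hb n
    simp only [denom_succ, Int.cast_mul]
    nlinarith

lemma tendsto_inv_denom (hb : ∀ n, 1 ≤ n → 2 ≤ b n) :
    Tendsto (fun n ↦ (denom b n : ℝ)⁻¹) atTop (𝓝 0) := by
  refine tendsto_inv_atTop_zero.comp (tendsto_atTop_mono (fun n ↦ ?_)
    (tendsto_pow_atTop_atTop_of_one_lt one_lt_two))
  exact_mod_cast two_pow_le_denom hb n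

/-- The factor `denom b N₀` forces each prime factor of `q` to be taken from a fresh `b_n`,
which makes the induction over the factorisation of `q` go through. -/
lemma exists_mul_denom_dvd_denom
    (hp : ∀ p : ℕ, p.Prime → {n : ℕ | 1 ≤ n ∧ (p : ℤ) ∣ b n}.Infinite)
    (q : ℕ) (hq : q ≠ 0) (N₀ : ℕ) : ∃ N, (q : ℤ) * denom b N₀ ∣ denom b N := by
  induction q using Nat.recOnMul generalizing N₀ with
  | zero => exact absurd rfl hq
  | one => exact ⟨N₀, by simp⟩
  | prime p hp' =>
    obtain ⟨n, ⟨-, hpn⟩, hn⟩ := (hp p hp').exists_gt N₀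
    obtain ⟨n, rfl⟩ := Nat.exists_eq_add_of_lt hn
    refine ⟨N₀ + n + 1, ?_⟩
    rw [denom_succ, mul_comm]
    exact mul_dvd_mul (denom_dvd_denom b (Nat.le_add_right _ _)) hpn
  | mul m k ihm ihk =>
    obtain ⟨M, hM⟩ := ihm (left_ne_zero_of_mul hq) N₀
    obtain ⟨K, hK⟩ := ihk (right_ne_zero_of_mul hq) M
    refine ⟨K, dvd_trans ?_ hK⟩
    rw [Nat.cast_mul, mul_comm (m : ℤ), mul_assoc]
    exact mul_dvd_mul_left _ hM

lemma hasSum_inv_denom_sub (hb : ∀ n, 1 ≤ n → 2 ≤ b n) (N : ℕ) :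
    HasSum (fun m ↦ (denom b (m + N) : ℝ)⁻¹ - (denom b (m + N + 1) : ℝ)⁻¹) (denom b N)⁻¹ := by
  have hanti : Antitone fun m ↦ (denom b (m + N) : ℝ)⁻¹ := fun m n hmn ↦
    inv_anti₀ (denom_pos hb _) (denom_mono hb (by omega))
  simpa [add_right_comm] using
    hasSum_sub_succ_of_antitone hanti ((tendsto_add_atTop_iff_nat N).2 (tendsto_inv_denom hb))

lemma inv_denom_sub_inv_denom_succ_sub_term (hb : ∀ n, 1 ≤ n → 2 ≤ b n) (n : ℕ) :
    (denom b n : ℝ)⁻¹ - (denom b (n + 1) : ℝ)⁻¹ - term a b n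
      = (b (n + 1) - 1 - a (n + 1)) / denom b (n + 1) := by
  have hb' : (b (n + 1) : ℝ) ≠ 0 := by
    have := hb (n + 1) n.succ_pos; positivity
  rw [term, denom_succ, Int.cast_mul]
  field_simp [(denom_pos hb n).ne']

lemma term_nonneg (hb : ∀ n, 1 ≤ n → 2 ≤ b n) (ha : ∀ n, 1 ≤ n → 0 ≤ a n ∧ a n ≤ b n - 1)
    (n : ℕ) : 0 ≤ term a b n := by
  have : (0 : ℝ) ≤ a (n + 1) := by exact_mod_cast (ha (n + 1) n.succ_pos).1
  exact div_nonneg this (denom_pos hb _).le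

lemma inv_denom_sub_inv_denom_succ_sub_term_nonneg (hb : ∀ n, 1 ≤ n → 2 ≤ b n)
    (ha : ∀ n, 1 ≤ n → 0 ≤ a n ∧ a n ≤ b n - 1) (n : ℕ) :
    0 ≤ (denom b n : ℝ)⁻¹ - (denom b (n + 1) : ℝ)⁻¹ - term a b n := by
  have : (0 : ℝ) ≤ b (n + 1) - 1 - a (n + 1) :=
    sub_nonneg.2 (by exact_mod_cast (ha (n + 1) n.succ_pos).2)
  rw [inv_denom_sub_inv_denom_succ_sub_term hb]
  exact div_nonneg this (denom_pos hb _).le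

lemma summable_term (hb : ∀ n, 1 ≤ n → 2 ≤ b n)
    (ha : ∀ n, 1 ≤ n → 0 ≤ a n ∧ a n ≤ b n - 1) : Summable (term a b) :=
  .of_nonneg_of_le (term_nonneg hb ha)
    (fun n ↦ sub_nonneg.1 (inv_denom_sub_inv_denom_succ_sub_term_nonneg hb ha n))
    (hasSum_inv_denom_sub hb 0).summable

lemma hasSum_tail (hb : ∀ n, 1 ≤ n → 2 ≤ b n) (ha : ∀ n, 1 ≤ n → 0 ≤ a n ∧ a n ≤ b n - 1)
    (N : ℕ) : HasSum (fun m ↦ term a b (m + N)) (tail a b N) :=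
  ((summable_nat_add_iff N).2 (summable_term hb ha)).hasSum

lemma hasSum_inv_denom_sub_tail (hb : ∀ n, 1 ≤ n → 2 ≤ b n)
    (ha : ∀ n, 1 ≤ n → 0 ≤ a n ∧ a n ≤ b n - 1) (N : ℕ) :
    HasSum (fun m ↦ (denom b (m + N) : ℝ)⁻¹ - (denom b (m + N + 1) : ℝ)⁻¹ - term a b (m + N))
      ((denom b N : ℝ)⁻¹ - tail a b N) :=
  (hasSum_inv_denom_sub hb N).sub (hasSum_tail hb ha N)

lemma tail_pos_iff (hb : ∀ n, 1 ≤ n → 2 ≤ b n) (ha : ∀ n, 1 ≤ n → 0 ≤ a n ∧ a n ≤ b n - 1)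
    (N : ℕ) : 0 < tail a b N ↔ ∃ m, 0 < a (m + N + 1) := by
  rw [(hasSum_tail hb ha N).pos_iff_exists_pos fun _ ↦ term_nonneg hb ha _]
  refine exists_congr fun m ↦ ?_
  rw [term, div_pos_iff_of_pos_right (denom_pos hb _), Int.cast_pos]

lemma tail_lt_inv_denom_iff (hb : ∀ n, 1 ≤ n → 2 ≤ b n)
    (ha : ∀ n, 1 ≤ n → 0 ≤ a n ∧ a n ≤ b n - 1) (N : ℕ) :
    tail a b N < (denom b N : ℝ)⁻¹ ↔ ∃ m, a (m + N + 1) < b (m + N + 1) - 1 := by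
  rw [← sub_pos, (hasSum_inv_denom_sub_tail hb ha N).pos_iff_exists_pos
    fun _ ↦ inv_denom_sub_inv_denom_succ_sub_term_nonneg hb ha _]
  refine exists_congr fun m ↦ ?_
  rw [inv_denom_sub_inv_denom_succ_sub_term hb, div_pos_iff_of_pos_right (denom_pos hb _)]
  norm_cast
  omega

lemma tail_nonneg (hb : ∀ n, 1 ≤ n → 2 ≤ b n) (ha : ∀ n, 1 ≤ n → 0 ≤ a n ∧ a n ≤ b n - 1)
    (N : ℕ) : 0 ≤ tail a b N :=
  (hasSum_tail hb ha N).nonneg fun _ ↦ term_nonneg hb ha _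

lemma tail_le_inv_denom (hb : ∀ n, 1 ≤ n → 2 ≤ b n)
    (ha : ∀ n, 1 ≤ n → 0 ≤ a n ∧ a n ≤ b n - 1) (N : ℕ) : tail a b N ≤ (denom b N : ℝ)⁻¹ :=
  sub_nonneg.1 <| (hasSum_inv_denom_sub_tail hb ha N).nonneg
    fun _ ↦ inv_denom_sub_inv_denom_succ_sub_term_nonneg hb ha _

lemma partialSum_add_tail (hb : ∀ n, 1 ≤ n → 2 ≤ b n)
    (ha : ∀ n, 1 ≤ n → 0 ≤ a n ∧ a n ≤ b n - 1) (N : ℕ) :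
    partialSum a b N + tail a b N = a 0 + ∑' n, term a b n := by
  rw [partialSum, tail, add_assoc, (summable_term hb ha).sum_add_tsum_nat_add]

lemma exists_denom_mul_partialSum_eq_int (hb : ∀ n, 1 ≤ n → 2 ≤ b n) (N : ℕ) :
    ∃ z : ℤ, denom b N * partialSum a b N = z := by
  induction N with
  | zero => exact ⟨a 0, by simp [denom, partialSum]⟩
  | succ N ih =>
    obtain ⟨z, hz⟩ := ih
    refine ⟨b (N + 1) * z + a (N + 1), ?_⟩
    have hd : (denom b (N + 1) : ℝ) ≠ 0 := (denom_pos hb _).ne'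
    rw [partialSum, sum_range_succ, ← add_assoc, ← partialSum, mul_add, term,
      mul_div_cancel₀ _ hd, denom_succ, Int.cast_mul, mul_right_comm, hz]
    push_cast
    ring

theorem irrational_iff_forall_tail_mem_Ioo (hb : ∀ n, 1 ≤ n → 2 ≤ b n)
    (ha : ∀ n, 1 ≤ n → 0 ≤ a n ∧ a n ≤ b n - 1)
    (hp : ∀ p : ℕ, p.Prime → {n : ℕ | 1 ≤ n ∧ (p : ℤ) ∣ b n}.Infinite) :
    Irrational (a 0 + ∑' n, term a b n) ↔
      ∀ N, 0 < tail a b N ∧ tail a b N < (denom b N : ℝ)⁻¹ := by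
  constructor
  · intro hθ N
    obtain ⟨z, hz⟩ := exists_denom_mul_partialSum_eq_int (a := a) hb N
    have hd := (denom_pos hb N).ne'
    have tail_ne : ∀ t : ℤ, tail a b N ≠ t / denom b N := fun t ht ↦ by
      refine (irrational_iff_ne_rational _).1 hθ (z + t) (denom b N) (by exact_mod_cast hd) ?_
      rw [← partialSum_add_tail hb ha N, ht, eq_div_iff hd, add_mul, div_mul_cancel₀ _ hd,
        mul_comm, hz]
      push_cast
      ring
    exact ⟨(tail_nonneg hb ha N).lt_of_ne fun h ↦ tail_ne 0 (by simp [← h]),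
      (tail_le_inv_denom hb ha N).lt_of_ne fun h ↦ tail_ne 1 (by simp [h])⟩
  · rintro htail ⟨r, hr⟩
    obtain ⟨N, k, hk⟩ : ∃ N, (r.den : ℤ) ∣ denom b N := by
      simpa [denom] using exists_mul_denom_dvd_denom hp r.den r.den_nz 0
    obtain ⟨z, hz⟩ := exists_denom_mul_partialSum_eq_int (a := a) hb N
    have hnum : (r.den : ℝ) * r = r.num := by exact_mod_cast r.den_mul_eq_num
    have hθ := (partialSum_add_tail hb ha N).trans hr.symm
    have hk' : (denom b N : ℝ) = r.den * k := by exact_mod_cast hk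
    have hint : (denom b N : ℝ) * tail a b N = (k * r.num - z : ℤ) := by
      push_cast
      linear_combination (denom b N : ℝ) * hθ - hz + (r : ℝ) * hk' + (k : ℝ) * hnum
    have hd := denom_pos hb N
    have h0 : (0 : ℝ) < (k * r.num - z : ℤ) := hint ▸ mul_pos hd (htail N).1
    have h1 : ((k * r.num - z : ℤ) : ℝ) < 1 := hint ▸ (mul_inv_cancel₀ hd.ne') ▸
      mul_lt_mul_of_pos_left (htail N).2 hd
    norm_cast at h0 h1
    omega

end CantorSeries

open CantorSeries

/-- Cantor's theorem: if every prime divides infinitely many b_n, then the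
Cantor series θ is irrational iff a_n > 0 infinitely often and
a_n < b_n - 1 infinitely often. -/
theorem cantor_theorem (a b : ℕ → ℤ)
    (hb : ∀ n, 1 ≤ n → 2 ≤ b n)
    (ha : ∀ n, 1 ≤ n → 0 ≤ a n ∧ a n ≤ b n - 1)
    (hp : ∀ p : ℕ, p.Prime → {n : ℕ | 1 ≤ n ∧ (p : ℤ) ∣ b n}.Infinite) :
    Irrational ((a 0 : ℝ) + ∑' n : ℕ,
        (a (n + 1) : ℝ) / ∏ i ∈ Finset.range (n + 1), (b (i + 1) : ℝ))
      ↔ ({n : ℕ | 1 ≤ n ∧ 0 < a n}.Infinite ∧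
         {n : ℕ | 1 ≤ n ∧ a n < b n - 1}.Infinite) := by
  have hseries : ∑' n : ℕ, (a (n + 1) : ℝ) / ∏ i ∈ Finset.range (n + 1), (b (i + 1) : ℝ)
      = ∑' n, term a b n := by
    simp [term, denom]
  rw [hseries, irrational_iff_forall_tail_mem_Ioo hb ha hp, forall_and,
    Nat.infinite_setOf_one_le_and_iff, Nat.infinite_setOf_one_le_and_iff]
  simp only [tail_pos_iff hb ha, tail_lt_inv_denom_iff hb ha]
end

section
/- Let θ be an irrational Cantor series with σ = (b_1, b_2, …) such that every prime divides infinitely many b_n, and suppose θ_n ≤ 1/2 for all n ≥ 2, where θ_n = Σ_{k≥1} a_{n+k}/(b_{n+1}⋯b_{n+k}). Then for all integers p and q ≠ 0 with D(q, σ) > 1, |θ − p/q| > a_{D(q,σ)+1}/(b_1⋯b_{D(q,σ)+1}). -/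
set_option maxHeartbeats 1000000

open Finset in
lemma summable_aux (c d : ℕ → ℝ) (hd : ∀ n, 2 ≤ d n) (hc : ∀ n, 0 ≤ c n ∧ c n ≤ d n) :
    Summable (fun j => c j / ∏ i ∈ Finset.range (j + 1), d i) := by
  have hdpos : ∀ n, (0:ℝ) < d n := fun n => lt_of_lt_of_le two_pos (hd n)
  have hppos : ∀ n, (0:ℝ) < ∏ i ∈ range n, d i := fun n => prod_pos (fun i _ => hdpos i)
  have hgeo : Summable (fun j : ℕ => (1/2 : ℝ) ^ j) :=
    summable_geometric_of_lt_one (by norm_num) (by norm_num)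
  refine Summable.of_nonneg_of_le (fun j => div_nonneg (hc j).1 (le_of_lt (hppos (j+1)))) ?_ hgeo
  intro j
  have h2 : (2:ℝ)^j ≤ ∏ i ∈ range j, d i := by
    calc (2:ℝ)^j = ∏ _i ∈ range j, 2 := by rw [prod_const, card_range]
    _ ≤ ∏ i ∈ range j, d i := prod_le_prod (fun _ _ => by norm_num) (fun i _ => hd i)
  have hps : ∏ i ∈ range (j+1), d i = (∏ i ∈ range j, d i) * d j := prod_range_succ d j
  calc c j / ∏ i ∈ range (j+1), d i ≤ d j / ∏ i ∈ range (j+1), d i := by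
        gcongr
        · exact le_of_lt (hppos (j+1))
        · exact (hc j).2
    _ = 1 / ∏ i ∈ range j, d i := by
        rw [hps, eq_div_iff (hppos j).ne']
        rw [div_mul_eq_mul_div, mul_comm]
        exact div_self (mul_pos (hppos j) (hdpos j)).ne'
    _ ≤ 1 / 2^j := one_div_le_one_div_of_le (by positivity) h2
    _ = (1/2:ℝ)^j := by rw [one_div_pow]

open Finset in
lemma exists_dvd_prod_aux (b : ℕ → ℤ)
    (hp : ∀ p : ℕ, p.Prime → {n : ℕ | 1 ≤ n ∧ (p : ℤ) ∣ b n}.Infinite) :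
    ∀ m : ℕ, 1 ≤ m → ∃ n, 1 ≤ n ∧ (m : ℤ) ∣ ∏ i ∈ Finset.range n, b (i + 1) := by
  intro m
  induction m using Nat.strong_induction_on with
  | _ m ih =>
    intro hm
    rcases eq_or_lt_of_le hm with h1 | h2
    · exact ⟨1, le_refl 1, by rw [← h1]; exact one_dvd _⟩
    · set P := m.minFac with hPdef
      have hPprime : P.Prime := Nat.minFac_prime (by omega)
      have hPdvd : P ∣ m := Nat.minFac_dvd m
      have hdiv1 : 1 ≤ m / P := Nat.one_le_div_iff hPprime.pos |>.2 (Nat.le_of_dvd (by omega) hPdvd)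
      have hlt : m / P < m := Nat.div_lt_self (by omega) hPprime.one_lt
      obtain ⟨n, hn1, hdvd⟩ := ih (m / P) hlt hdiv1
      obtain ⟨j, hjmem, hjn⟩ := (hp P hPprime).exists_gt n
      obtain ⟨hj1, hjdvd⟩ := hjmem
      refine ⟨j, hj1, ?_⟩
      have hmeq : (m : ℤ) = (m / P : ℕ) * (P : ℕ) := by
        rw [← Nat.cast_mul, Nat.div_mul_cancel hPdvd]
      rw [hmeq]
      have hsplit : ∏ i ∈ range j, b (i + 1) = (∏ i ∈ range (j - 1), b (i + 1)) * b j := by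
        have : j = (j - 1) + 1 := by omega
        rw [this, prod_range_succ, ← this]
      rw [hsplit]
      exact mul_dvd_mul
        (hdvd.trans (prod_dvd_prod_of_subset _ _ _ (range_subset_range.2 (by omega)))) hjdvd

open Finset in
/-- Irrationality measure for Cantor series: if θ is an irrational Cantor
series, every prime divides infinitely many b_n, the tails θ_n ≤ 1/2 for
n ≥ 2, and D(q,σ) > 1, then |θ - p/q| > a_{D+1}/(b_1⋯b_{D+1}). -/
theorem cantor_series_irrationality_measure (a b : ℕ → ℤ)
    (hb : ∀ n, 1 ≤ n → 2 ≤ b n)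
    (ha : ∀ n, 1 ≤ n → 0 ≤ a n ∧ a n ≤ b n - 1)
    (hp : ∀ p : ℕ, p.Prime → {n : ℕ | 1 ≤ n ∧ (p : ℤ) ∣ b n}.Infinite)
    (hirr : Irrational ((a 0 : ℝ) + ∑' j : ℕ,
        (a (j + 1) : ℝ) / ∏ i ∈ Finset.range (j + 1), (b (i + 1) : ℝ)))
    (htail : ∀ n, 2 ≤ n →
      (∑' k : ℕ, (a (n + k + 1) : ℝ) /
          ∏ i ∈ Finset.range (k + 1), (b (n + i + 1) : ℝ)) ≤ 1 / 2)
    (p q : ℤ) (hq : q ≠ 0)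
    (hD : 1 < sInf {n : ℕ | 1 ≤ n ∧ q ∣ ∏ i ∈ Finset.range n, b (i + 1)}) :
    |((a 0 : ℝ) + ∑' j : ℕ,
        (a (j + 1) : ℝ) / ∏ i ∈ Finset.range (j + 1), (b (i + 1) : ℝ))
      - (p : ℝ) / q|
    > (a (sInf {n : ℕ | 1 ≤ n ∧ q ∣ ∏ i ∈ Finset.range n, b (i + 1)} + 1) : ℝ) /
      ∏ i ∈ Finset.range
        (sInf {n : ℕ | 1 ≤ n ∧ q ∣ ∏ i ∈ Finset.range n, b (i + 1)} + 1),
        (b (i + 1) : ℝ) := by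
  set D := sInf {n : ℕ | 1 ≤ n ∧ q ∣ ∏ i ∈ Finset.range n, b (i + 1)} with hD_def
  -- basic positivity
  have hbR : ∀ n, (2:ℝ) ≤ (b (n+1) : ℝ) := fun n => by exact_mod_cast hb (n+1) (by omega)
  have hbpos : ∀ n, (0:ℝ) < (b (n+1) : ℝ) := fun n => lt_of_lt_of_le two_pos (hbR n)
  have hPpos : ∀ n, (0:ℝ) < ∏ i ∈ range n, (b (i+1) : ℝ) :=
    fun n => prod_pos fun i _ => hbpos i
  have haR : ∀ n, (0:ℝ) ≤ (a (n+1) : ℝ) ∧ (a (n+1) : ℝ) ≤ (b (n+1) : ℝ) := by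
    intro n
    have h := ha (n+1) (by omega)
    constructor
    · exact_mod_cast h.1
    · have : a (n+1) ≤ b (n+1) := by linarith [h.2]
      exact_mod_cast this
  -- membership of D
  have hne : {n : ℕ | 1 ≤ n ∧ q ∣ ∏ i ∈ Finset.range n, b (i + 1)}.Nonempty := by
    obtain ⟨n, hn1, hdvd⟩ := exists_dvd_prod_aux b hp q.natAbs
      (Nat.one_le_iff_ne_zero.2 (Int.natAbs_ne_zero.2 hq))
    exact ⟨n, hn1, Int.natAbs_dvd.1 hdvd⟩
  have hDmem := Nat.sInf_mem hne
  rw [← hD_def] at hDmem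
  obtain ⟨hD1, hqP⟩ := hDmem
  have hD2 : 2 ≤ D := hD
  clear_value D
  -- summability
  have hsum : Summable (fun j => (a (j+1) : ℝ) / ∏ i ∈ range (j+1), (b (i+1) : ℝ)) :=
    summable_aux _ _ (fun n => hbR n) (fun n => haR n)
  have hsumT : ∀ n, Summable (fun k => (a (n+k+1) : ℝ) / ∏ i ∈ range (k+1), (b (n+i+1) : ℝ)) :=
    fun n => summable_aux (fun k => (a (n+k+1) : ℝ)) (fun i => (b (n+i+1) : ℝ))
      (fun i => hbR (n+i)) (fun k => haR (n+k))
  set PR := ∏ i ∈ range D, (b (i+1) : ℝ) with hPR_def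
  have hPRpos : 0 < PR := hPpos D
  set T := ∑' k : ℕ, (a (D+k+1) : ℝ) / ∏ i ∈ range (k+1), (b (D+i+1) : ℝ) with hT_def
  have hterm : ∀ k : ℕ, (a (k + D + 1) : ℝ) / ∏ i ∈ range (k + D + 1), (b (i+1) : ℝ)
      = ((a (D+k+1) : ℝ) / ∏ i ∈ range (k+1), (b (D+i+1) : ℝ)) * (1/PR) := by
    intro k
    have h1 : k + D + 1 = D + (k+1) := by omega
    rw [h1, prod_range_add, show D + (k+1) = D + k + 1 from by omega, ← hPR_def]
    ring
  have hsplit : (∑' j : ℕ, (a (j+1):ℝ) / ∏ i ∈ range (j+1), (b (i+1):ℝ))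
      = (∑ j ∈ range D, (a (j+1):ℝ) / ∏ i ∈ range (j+1), (b (i+1):ℝ)) + T * (1/PR) := by
    rw [← Summable.sum_add_tsum_nat_add D hsum]
    congr 1
    rw [hT_def, ← tsum_mul_right]
    exact tsum_congr hterm
  -- integer part
  set P : ℤ := ∏ i ∈ range D, b (i+1) with hP_def
  have hPR_cast : PR = (P : ℝ) := by rw [hPR_def, hP_def]; push_cast; rfl
  obtain ⟨c, hc⟩ := hqP
  have hq' : (q:ℝ) ≠ 0 := Int.cast_ne_zero.2 hq
  have hPc : PR = (q:ℝ) * (c:ℝ) := by rw [hPR_cast, hc]; push_cast; ring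
  set N : ℤ := a 0 * P + (∑ j ∈ range D, a (j+1) * ∏ i ∈ Ico (j+1) D, b (i+1)) - p * c
    with hN_def
  have hterm2 : ∀ j ∈ range D, ((a (j+1):ℝ) / ∏ i ∈ range (j+1), (b (i+1):ℝ)) * PR
      = (a (j+1):ℝ) * ∏ i ∈ Ico (j+1) D, (b (i+1):ℝ) := by
    intro j hj
    have hjD : j + 1 ≤ D := mem_range.1 hj
    have hdecomp : PR = (∏ i ∈ range (j+1), (b (i+1):ℝ)) * ∏ i ∈ Ico (j+1) D, (b (i+1):ℝ) := by
      rw [hPR_def, range_eq_Ico, ← prod_Ico_consecutive _ (Nat.zero_le (j+1)) hjD, ← range_eq_Ico]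
    rw [hdecomp, div_mul_eq_mul_div, mul_comm (∏ i ∈ range (j+1), (b (i+1):ℝ)) _,
      mul_div_assoc, mul_div_assoc]
    rw [div_self (hPpos (j+1)).ne', mul_one]
  have hNcast : (N:ℝ) = (a 0:ℝ) * PR
      + (∑ j ∈ range D, (a (j+1):ℝ) * ∏ i ∈ Ico (j+1) D, (b (i+1):ℝ)) - (p:ℝ)*(c:ℝ) := by
    rw [hN_def, hPR_cast, hP_def]
    push_cast
    ring
  have hhead : (a 0 : ℝ) + (∑ j ∈ range D, (a (j+1):ℝ) / ∏ i ∈ range (j+1), (b (i+1):ℝ))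
      - (p:ℝ)/q = (N:ℝ) / PR := by
    rw [eq_div_iff hPRpos.ne', hNcast]
    rw [sub_mul, add_mul, sum_mul, Finset.sum_congr rfl hterm2]
    have hpq : (p:ℝ)/q * PR = (p:ℝ) * (c:ℝ) := by
      rw [hPc]
      field_simp
    rw [hpq]
  -- tail facts
  have hQpos : ∀ k, (0:ℝ) < ∏ i ∈ range (k+1), (b (D+i+1) : ℝ) :=
    fun k => prod_pos fun i _ => hbpos (D+i)
  have hT0 : 0 ≤ T := by
    rw [hT_def]
    exact tsum_nonneg fun k => div_nonneg (haR (D+k)).1 (hQpos k).le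
  have hThalf : T ≤ 1/2 := htail D hD2
  -- strict lower bound for T
  have hTfirst : (a (D+1) : ℝ) / (b (D+1) : ℝ) < T := by
    have hsT := hsumT D
    have hsplitT : T = (a (D+1) : ℝ) / (b (D+1) : ℝ)
        + ∑' k : ℕ, (a (D+(k+1)+1) : ℝ) / ∏ i ∈ range ((k+1)+1), (b (D+i+1) : ℝ) := by
      rw [hT_def, ← Summable.sum_add_tsum_nat_add 1 hsT, Finset.sum_range_one, prod_range_one]
    have hpos : 0 < ∑' k : ℕ, (a (D+(k+1)+1) : ℝ) / ∏ i ∈ range ((k+1)+1), (b (D+i+1) : ℝ) := by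
      have hgsum : Summable (fun k : ℕ =>
          (a (D+(k+1)+1) : ℝ) / ∏ i ∈ range ((k+1)+1), (b (D+i+1) : ℝ)) :=
        (summable_nat_add_iff (f := fun k : ℕ =>
          (a (D+k+1) : ℝ) / ∏ i ∈ range (k+1), (b (D+i+1) : ℝ)) 1).2 (hsumT D)
      have hgnn : ∀ k : ℕ, 0 ≤ (a (D+(k+1)+1) : ℝ) / ∏ i ∈ range ((k+1)+1), (b (D+i+1) : ℝ) :=
        fun k => div_nonneg (haR (D+(k+1))).1 (prod_pos fun i _ => hbpos (D+i)).le
      rcases lt_or_eq_of_le (tsum_nonneg hgnn) with h | h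
      · exact h
      · exfalso
        have hzero : ∀ k : ℕ, a (D + (k+1) + 1) = 0 := by
          intro k
          have h1 : (a (D+(k+1)+1) : ℝ) / ∏ i ∈ range ((k+1)+1), (b (D+i+1) : ℝ) ≤ 0 := by
            rw [h]
            exact Summable.le_tsum hgsum k fun j _ => hgnn j
          have h2 : (a (D+(k+1)+1) : ℝ) / ∏ i ∈ range ((k+1)+1), (b (D+i+1) : ℝ) = 0 :=
            le_antisymm h1 (hgnn k)
          have h3 : (a (D+(k+1)+1) : ℝ) = 0 := by
            rcases div_eq_zero_iff.1 h2 with h' | h'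
            · exact h'
            · exact absurd h' (prod_pos fun i _ => hbpos (D+i)).ne'
          exact_mod_cast h3
        -- θ is rational: contradiction
        have htailzero : ∀ j : ℕ,
            (a (j + (D+1) + 1) : ℝ) / ∏ i ∈ range (j + (D+1) + 1), (b (i+1) : ℝ) = 0 := by
          intro j
          have : a (j + (D+1) + 1) = 0 := by
            rw [show j + (D+1) + 1 = D + (j+1) + 1 from by omega]
            exact hzero j
          rw [this]
          simp
        have hfin : (∑' j : ℕ, (a (j+1):ℝ) / ∏ i ∈ range (j+1), (b (i+1):ℝ))
            = ∑ j ∈ range (D+1), (a (j+1):ℝ) / ∏ i ∈ range (j+1), (b (i+1):ℝ) := by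
          rw [← Summable.sum_add_tsum_nat_add (D+1) hsum]
          have : (∑' j : ℕ, (a (j + (D+1) + 1):ℝ) / ∏ i ∈ range (j + (D+1) + 1), (b (i+1):ℝ))
              = 0 := by
            rw [tsum_congr htailzero]
            exact tsum_zero
          rw [this, add_zero]
        set r : ℚ := (a 0 : ℚ) + ∑ j ∈ range (D+1), (a (j+1) : ℚ) / ∏ i ∈ range (j+1), (b (i+1) : ℚ) with hr_def
        apply hirr
        refine ⟨r, ?_⟩
        rw [hfin, hr_def]
        push_cast
        rfl
    rw [hsplitT]
    exact lt_add_of_pos_right _ hpos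
  -- assemble
  have hgoal_eq : (a 0:ℝ) + (∑' j : ℕ, (a (j+1):ℝ) / ∏ i ∈ range (j+1), (b (i+1):ℝ))
      - (p:ℝ)/q = ((N:ℝ) + T) / PR := by
    rw [hsplit]
    calc (a 0:ℝ) + ((∑ j ∈ range D, (a (j+1):ℝ) / ∏ i ∈ range (j+1), (b (i+1):ℝ))
          + T * (1/PR)) - (p:ℝ)/q
        = ((a 0:ℝ) + (∑ j ∈ range D, (a (j+1):ℝ) / ∏ i ∈ range (j+1), (b (i+1):ℝ))
          - (p:ℝ)/q) + T * (1/PR) := by ring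
      _ = (N:ℝ)/PR + T * (1/PR) := by rw [hhead]
      _ = ((N:ℝ) + T)/PR := by ring
  rw [hgoal_eq, abs_div, abs_of_pos hPRpos]
  have hgeT : T ≤ |(N:ℝ) + T| := by
    rcases eq_or_ne N 0 with h | h
    · simp [h, abs_of_nonneg hT0]
    · have h1 : (1:ℝ) ≤ |(N:ℝ)| := by
        have : (1:ℤ) ≤ |N| := Int.one_le_abs h
        calc (1:ℝ) = ((1:ℤ):ℝ) := by norm_num
          _ ≤ ((|N|:ℤ):ℝ) := by exact_mod_cast this
          _ = |(N:ℝ)| := by push_cast; rfl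
      have h3 : |(N:ℝ)| ≤ |(N:ℝ)+T| + |T| := by
        calc |(N:ℝ)| = |((N:ℝ)+T) + (-T)| := by congr 1; ring
          _ ≤ |(N:ℝ)+T| + |(-T)| := abs_add_le _ _
          _ = |(N:ℝ)+T| + |T| := by rw [abs_neg]
      have habsT : |T| = T := abs_of_nonneg hT0
      linarith
  have hRHS : (a (D+1):ℝ) / ∏ i ∈ range (D+1), (b (i+1):ℝ)
      = ((a (D+1):ℝ)/(b (D+1):ℝ))/PR := by
    rw [prod_range_succ, ← hPR_def, div_div, mul_comm]
  rw [hRHS]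
  calc ((a (D+1):ℝ)/(b (D+1):ℝ))/PR < T/PR := by
        gcongr
    _ ≤ |(N:ℝ)+T|/PR := by
        gcongr
end

section
/- For all integers p and q with q ≠ 0, |e − p/q| > 1/((D(q, σ) + 2)!), where σ = (2, 3, 4, …) and D(q, σ) = min{n : q | (n+1)!}. -/
/-- For all integers p, q with q ≠ 0, |e - p/q| > 1/((D(q,σ) + 2)!) where
σ = (2,3,4,…), i.e. D(q,σ) = min{n ≥ 1 : q ∣ (n+1)!}. -/
theorem exp_one_irrationality_measure_D (p q : ℤ) (hq : q ≠ 0) :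
    |Real.exp 1 - (p : ℝ) / q|
      > 1 / (Nat.factorial
          (sInf {n : ℕ | 1 ≤ n ∧ q ∣ (Nat.factorial (n + 1) : ℤ)} + 2) : ℝ) := by
  set Sset := {n : ℕ | 1 ≤ n ∧ q ∣ (Nat.factorial (n + 1) : ℤ)} with hSset
  have hne : Sset.Nonempty := by
    refine ⟨q.natAbs, Int.natAbs_pos.mpr hq, ?_⟩
    exact (Int.natAbs_dvd).1 (Int.natCast_dvd_natCast.2
      (Nat.dvd_factorial (Int.natAbs_pos.mpr hq) (Nat.le_succ _)))
  have hD : sInf Sset ∈ Sset := Nat.sInf_mem hne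
  set D := sInf Sset with hDdef
  set m := D + 1 with hm
  have hm2' : 2 ≤ m := Nat.succ_le_succ hD.1
  have hqm : q ∣ (Nat.factorial m : ℤ) := hD.2
  obtain ⟨c, hc⟩ := hqm
  -- real facts
  have hfacpos : ∀ k : ℕ, (0:ℝ) < (Nat.factorial k : ℝ) := fun k =>
    by exact_mod_cast Nat.factorial_pos k
  set S : ℝ := ∑ i ∈ Finset.range (m + 1), (1:ℝ) ^ i / (Nat.factorial i) with hS
  set ρ : ℝ := Real.exp 1 - S with hρ
  have hub : ρ ≤ ((m:ℝ) + 2) / ((Nat.factorial (m+1) : ℝ) * ((m:ℝ)+1)) := by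
    have h := Real.exp_bound (x := 1) (by norm_num) (n := m + 1) (Nat.succ_pos m)
    rw [abs_one, one_pow, one_mul] at h
    have h' := (abs_le.1 h).2
    rw [hρ, hS]
    calc Real.exp 1 - ∑ i ∈ Finset.range (m + 1), (1:ℝ) ^ i / (Nat.factorial i)
        ≤ ((m+1:ℕ).succ : ℝ) / ((Nat.factorial (m+1) : ℝ) * ((m+1:ℕ) : ℝ)) := h'
      _ = ((m:ℝ) + 2) / ((Nat.factorial (m+1) : ℝ) * ((m:ℝ)+1)) := by push_cast; ring
  have hlb : 1 / (Nat.factorial (m+1) : ℝ) < ρ := by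
    have h := Real.sum_le_exp_of_nonneg (x := 1) (by norm_num) (m + 3)
    have hsplit : ∑ i ∈ Finset.range (m + 3), (1:ℝ) ^ i / (Nat.factorial i)
        = S + (1:ℝ) ^ (m+1) / (Nat.factorial (m+1)) + (1:ℝ)^(m+2) / (Nat.factorial (m+2)) := by
      rw [hS]
      rw [Finset.sum_range_succ, Finset.sum_range_succ]
    have hpos : (0:ℝ) < (1:ℝ) / (Nat.factorial (m+2)) := by positivity
    have : S + 1 / (Nat.factorial (m+1) : ℝ) < Real.exp 1 := by
      rw [hsplit] at h
      simp only [one_pow] at h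
      linarith
    rw [hρ]; linarith
  -- integer part of m! * S
  set B : ℕ := ∑ i ∈ Finset.range (m + 1), Nat.factorial m / Nat.factorial i with hB
  have hBS : (B : ℝ) = (Nat.factorial m : ℝ) * S := by
    rw [hB, hS, Nat.cast_sum, Finset.mul_sum]
    refine Finset.sum_congr rfl fun i hi => ?_
    have hdvd : Nat.factorial i ∣ Nat.factorial m :=
      Nat.factorial_dvd_factorial (Nat.lt_succ_iff.1 (Finset.mem_range.1 hi))
    rw [Nat.cast_div hdvd (by exact_mod_cast (hfacpos i).ne')]
    rw [one_pow]
    ring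
  set A : ℤ := (B : ℤ) - p * c with hA
  set r : ℝ := (Nat.factorial m : ℝ) * ρ with hr
  have hkey : (Nat.factorial m : ℝ) * (Real.exp 1 - (p:ℝ)/q) = (A : ℝ) + r := by
    have hq' : (q : ℝ) ≠ 0 := Int.cast_ne_zero.2 hq
    have hcast : (Nat.factorial m : ℝ) = (q : ℝ) * (c : ℝ) := by
      exact_mod_cast congrArg (Int.cast : ℤ → ℝ) hc
    have h1 : (Nat.factorial m : ℝ) * ((p:ℝ)/q) = (p:ℝ) * (c:ℝ) := by
      rw [hcast]; field_simp
    have h2 : (Nat.factorial m : ℝ) * (Real.exp 1 - (p:ℝ)/q)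
        = (Nat.factorial m : ℝ) * S + r - (Nat.factorial m : ℝ)*((p:ℝ)/q) := by
      rw [hr, hρ]; ring
    rw [h2, ← hBS, h1, hA]
    push_cast
    ring
  have hfacm1 : (Nat.factorial (m+1) : ℝ) = (Nat.factorial m : ℝ) * (m+1) := by
    rw [Nat.factorial_succ]; push_cast; ring
  have hrlb : 1 / ((m:ℝ)+1) < r := by
    rw [hr]
    have := mul_lt_mul_of_pos_left hlb (hfacpos m)
    rw [hfacm1] at this
    have hmpos : (0:ℝ) < (m:ℝ) + 1 := by positivity
    calc 1 / ((m:ℝ)+1) = (Nat.factorial m : ℝ) * (1 / ((Nat.factorial m : ℝ) * ((m:ℝ)+1))) := by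
          field_simp
      _ < _ := this
  have hmpos : (0:ℝ) < (m:ℝ) := by
    have : (0:ℕ) < m := by omega
    exact_mod_cast this
  have hrub : r ≤ 1 / (m:ℝ) := by
    rw [hr]
    have h := mul_le_mul_of_nonneg_left hub (le_of_lt (hfacpos m))
    rw [hfacm1] at h
    refine h.trans ?_
    have hf := (hfacpos m).ne'
    have heq : (Nat.factorial m:ℝ) * (((m:ℝ)+2)/((Nat.factorial m:ℝ)*((m:ℝ)+1)*((m:ℝ)+1)))
        = ((m:ℝ)+2)/(((m:ℝ)+1)*((m:ℝ)+1)) := by field_simp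
    rw [heq, div_le_div_iff₀ (by positivity) hmpos]
    nlinarith
  have hmR : (2:ℝ) ≤ (m:ℝ) := by exact_mod_cast hm2'
  have h0 : (0:ℝ) < 1/((m:ℝ)+1) := by positivity
  have habs : 1 / ((m:ℝ)+1) < |(A:ℝ) + r| := by
    rcases le_or_gt 0 A with hA0 | hA0
    · have : (0:ℝ) ≤ (A:ℝ) := by exact_mod_cast hA0
      rw [abs_of_pos (by linarith)]
      linarith
    · have hA1 : (A:ℝ) ≤ -1 := by
        have : A ≤ -1 := by omega
        exact_mod_cast this
      have hhalf : 1/(m:ℝ) ≤ 1/2 := by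
        rw [div_le_div_iff₀ hmpos (by norm_num)]; linarith
      have hneg : (A:ℝ) + r < 0 := by linarith
      rw [abs_of_neg hneg]
      have h1 : 1 - r ≤ -((A:ℝ) + r) := by linarith
      have h2 : 1 / ((m:ℝ)+1) < 1 - 1/(m:ℝ) := by
        rw [div_lt_iff₀ (by linarith)]
        have : 1/(m:ℝ) ≤ 1/2 := by
          rw [div_le_div_iff₀ (by linarith) (by norm_num)]; linarith
        nlinarith
      linarith
  -- conclude
  have hgoal : 1 / (Nat.factorial (m + 1) : ℝ) < |Real.exp 1 - (p : ℝ) / q| := by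
    have h := habs
    rw [← hkey, abs_mul, abs_of_pos (hfacpos m)] at h
    rw [hfacm1, div_lt_iff₀ (by positivity)]
    rw [div_lt_iff₀ (by positivity)] at h
    calc (1:ℝ) < (Nat.factorial m : ℝ) * |Real.exp 1 - (p:ℝ)/q| * ((m:ℝ)+1) := h
      _ = |Real.exp 1 - (p:ℝ)/q| * ((Nat.factorial m : ℝ) * ((m:ℝ)+1)) := by ring
  show 1 / (Nat.factorial (D + 2) : ℝ) < _
  have : D + 2 = m + 1 := by omega
  rw [this]
  exact hgoal
end

section
/- For all integers p and q with q ≥ 2, |e − p/q| > 1/((S(q) + 1)!), where S(q) is the Smarandache function, the least positive integer m with q | m!. -/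
/-!
If `q ∣ n !` then `p / q = a / n !` for an integer `a`, so it suffices that `n ! * e` is at distance
more than `1 / (n + 1)` from every integer. Now `n ! * e = A + r` with `A = ∑_{i ≤ n} n ! / i !` an
integer and `r = n ! * ∑_{i > n} 1 / i !`, and comparing the tail with its first term and with a
geometric series gives `1 / (n + 1) < r ≤ (n + 2) / (n + 1) ^ 2 < 1 - 1 / (n + 1)` once `n ≥ 2`.
Take `n = S(q)`, which is at least `2` because `q ≥ 2` does not divide `0 ! = 1 ! = 1`.
-/

open Nat Finset

theorem Nat.factorial_mul_sum_inv_factorial (n : ℕ) :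
    (n ! : ℝ) * ∑ i ∈ range (n + 1), (i ! : ℝ)⁻¹ = ((∑ i ∈ range (n + 1), n ! / i ! : ℕ) : ℝ) := by
  rw [mul_sum, cast_sum]
  refine sum_congr rfl fun i hi => ?_
  rw [cast_div (factorial_dvd_factorial (mem_range_succ_iff.mp hi)) (by positivity), div_eq_mul_inv]

theorem lt_abs_sub_intCast_of_lt_of_lt {x δ : ℝ} (a : ℤ) (hlo : δ < x - a) (hhi : δ < a + 1 - x)
    (m : ℤ) : δ < |x - m| := by
  rcases le_or_gt m a with hm | hm
  · have : (m : ℝ) ≤ a := mod_cast hm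
    exact (le_abs_self _).trans_lt' (by linarith)
  · have : (a : ℝ) + 1 ≤ m := mod_cast hm
    exact (neg_le_abs _).trans_lt' (by linarith)

namespace Real

theorem exp_one_sub_sum_inv_factorial_le (n : ℕ) :
    exp 1 - ∑ i ∈ range (n + 1), (i ! : ℝ)⁻¹ ≤ (n + 2) / ((n + 1)! * (n + 1)) := by
  have h := exp_bound' zero_le_one le_rfl n.succ_pos
  simp only [one_pow, one_div, one_mul, Nat.succ_eq_add_one] at h
  push_cast at h
  rw [add_assoc, one_add_one_eq_two] at h
  linarith

theorem inv_factorial_succ_lt_exp_one_sub_sum (n : ℕ) :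
    ((n + 1)! : ℝ)⁻¹ < exp 1 - ∑ i ∈ range (n + 1), (i ! : ℝ)⁻¹ := by
  have h := sum_le_exp_of_nonneg zero_le_one (n + 3)
  simp only [one_pow, one_div, sum_range_succ _ (n + 2), sum_range_succ _ (n + 1)] at h
  have : (0 : ℝ) < ((n + 2)! : ℝ)⁻¹ := by positivity
  linarith

theorem one_div_succ_lt_abs_factorial_mul_exp_one_sub_intCast {n : ℕ} (hn : 2 ≤ n) (m : ℤ) :
    1 / ((n : ℝ) + 1) < |n ! * exp 1 - m| := by
  set a : ℕ := ∑ i ∈ range (n + 1), n ! / (i !)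
  have ha : (n ! : ℝ) * exp 1 - a = n ! * (exp 1 - ∑ i ∈ range (n + 1), (i ! : ℝ)⁻¹) := by
    rw [mul_sub, Nat.factorial_mul_sum_inv_factorial]
  have hfac : ((n + 1)! : ℝ) = (n + 1) * n ! := by push_cast [factorial_succ]; ring
  have hpos : (0 : ℝ) < n ! := by positivity
  have hlo : 1 / ((n : ℝ) + 1) < n ! * exp 1 - a := calc
    1 / ((n : ℝ) + 1) = n ! * ((n + 1)! : ℝ)⁻¹ := by rw [hfac]; field_simp
    _ < _ := ha ▸ mul_lt_mul_of_pos_left (inv_factorial_succ_lt_exp_one_sub_sum n) hpos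
  have hhi : n ! * exp 1 - a ≤ ((n : ℝ) + 2) / (n + 1) ^ 2 := calc
    _ ≤ (n ! : ℝ) * ((n + 2) / ((n + 1)! * (n + 1))) :=
      ha ▸ mul_le_mul_of_nonneg_left (exp_one_sub_sum_inv_factorial_le n) hpos.le
    _ = ((n : ℝ) + 2) / (n + 1) ^ 2 := by rw [hfac]; field_simp
  have hgap : 1 / ((n : ℝ) + 1) + (n + 2) / (n + 1) ^ 2 < 1 := by
    have hn' : (2 : ℝ) ≤ n := by exact_mod_cast hn
    rw [div_add_div _ _ (by positivity) (by positivity), div_lt_one (by positivity)]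
    nlinarith
  exact lt_abs_sub_intCast_of_lt_of_lt a (mod_cast hlo) (by push_cast; linarith) m

theorem one_div_factorial_succ_lt_abs_exp_one_sub_div (p q : ℤ) {n : ℕ} (hn : 2 ≤ n)
    (hq : q ∣ n !) : 1 / ((n + 1)! : ℝ) < |exp 1 - p / q| := by
  obtain ⟨k, hk⟩ := hq
  have hpos : (0 : ℝ) < n ! := by positivity
  have hqk : (n ! : ℝ) = q * k := mod_cast hk
  have hq0 : (q : ℝ) ≠ 0 := left_ne_zero_of_mul (hqk ▸ hpos.ne')
  have hk0 : (k : ℝ) ≠ 0 := right_ne_zero_of_mul (hqk ▸ hpos.ne')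
  have hsub : exp 1 - p / q = (n ! * exp 1 - (p * k : ℤ)) / n ! := by
    rw [hqk]; push_cast; field_simp
  have hfac : ((n + 1)! : ℝ) = (n + 1) * n ! := by push_cast [factorial_succ]; ring
  rw [hsub, abs_div, abs_of_pos hpos, hfac, ← div_div]
  exact div_lt_div_of_pos_right (one_div_succ_lt_abs_factorial_mul_exp_one_sub_intCast hn _) hpos

end Real

theorem Int.two_le_of_dvd_factorial {q : ℤ} (hq : 2 ≤ q) {n : ℕ} (h : q ∣ (n ! : ℤ)) : 2 ≤ n := by
  by_contra! hn
  rw [factorial_eq_one.mpr (by omega), Nat.cast_one] at h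
  have := Int.le_of_dvd one_pos h
  omega

theorem Int.sInf_setOf_dvd_factorial_mem {q : ℤ} (hq : q ≠ 0) :
    sInf {m : ℕ | 1 ≤ m ∧ q ∣ (m ! : ℤ)} ∈ {m : ℕ | 1 ≤ m ∧ q ∣ (m ! : ℤ)} :=
  Nat.sInf_mem ⟨q.natAbs, natAbs_pos.mpr hq,
    q.dvd_natAbs_self.trans (mod_cast dvd_factorial (natAbs_pos.mpr hq) le_rfl)⟩

/-- Sondow's measure: for integers p, q with q ≥ 2,
|e - p/q| > 1/((S(q) + 1)!) where S is the Smarandache function. -/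
theorem exp_one_irrationality_measure_smarandache (p q : ℤ) (hq : 2 ≤ q) :
    |Real.exp 1 - (p : ℝ) / q|
      > 1 / (Nat.factorial
          (sInf {m : ℕ | 1 ≤ m ∧ q ∣ (Nat.factorial m : ℤ)} + 1) : ℝ) := by
  obtain ⟨-, hdvd⟩ := Int.sInf_setOf_dvd_factorial_mem (q := q) (by omega)
  exact Real.one_div_factorial_succ_lt_abs_exp_one_sub_div p q (Int.two_le_of_dvd_factorial hq hdvd) hdvd
end

section
/- Let ξ = Σ_{n≥1} 1/(n!)^5 and σ = (2^5, 3^5, 4^5, …), i.e., b_n = (n+1)^5. Then for all integers p, q with q ≠ 0, |ξ − p/q| > 1/((D(q, σ) + 2)!)^5, where D(q, σ) = min{n : q | ((n+1)!)^5}. -/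
lemma xi_aux_summable : Summable (fun n : ℕ => (1 : ℝ) / (Nat.factorial (n + 1) : ℝ) ^ 5) := by
  refine Summable.of_nonneg_of_le (fun n => by positivity) (fun n => ?_)
    (summable_geometric_of_lt_one (r := (1:ℝ)/2) (by norm_num) (by norm_num))
  have h2 : (2:ℕ) ^ n ≤ Nat.factorial (n+1) := by
    have := Nat.factorial_mul_pow_le_factorial (m := 1) (n := n)
    simpa [Nat.factorial, Nat.add_comm] using this
  have h5 : (2:ℝ) ^ n ≤ (Nat.factorial (n+1) : ℝ) ^ 5 := by
    calc (2:ℝ) ^ n ≤ (Nat.factorial (n+1) : ℝ) := by exact_mod_cast h2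
    _ ≤ (Nat.factorial (n+1) : ℝ) ^ 5 := by
        exact_mod_cast Nat.le_self_pow (by norm_num) _
  rw [one_div, div_pow, one_pow, one_div]
  exact inv_anti₀ (by positivity) h5

/-- Irrationality measure for ξ = Σ_{n≥1} 1/(n!)^5 : for p, q ∈ ℤ, q ≠ 0,
|ξ - p/q| > 1/((D(q,σ) + 2)!)^5 where D(q,σ) = min{n ≥ 1 : q ∣ ((n+1)!)^5}. -/
theorem xi_irrationality_measure (p q : ℤ) (hq : q ≠ 0) :
    |(∑' n : ℕ, (1 : ℝ) / (Nat.factorial (n + 1) : ℝ) ^ 5) - (p : ℝ) / q|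
      > 1 / (Nat.factorial
          (sInf {n : ℕ | 1 ≤ n ∧ q ∣ (Nat.factorial (n + 1) : ℤ) ^ 5} + 2) : ℝ) ^ 5 := by
  classical
  set f : ℕ → ℝ := fun n => (1 : ℝ) / (Nat.factorial (n + 1) : ℝ) ^ 5 with hfdef
  have hsum : Summable f := xi_aux_summable
  set Sset : Set ℕ := {n : ℕ | 1 ≤ n ∧ q ∣ (Nat.factorial (n + 1) : ℤ) ^ 5} with hSset
  have hne : Sset.Nonempty := by
    refine ⟨q.natAbs, Int.natAbs_pos.mpr hq, ?_⟩
    have h1 : q.natAbs ∣ (Nat.factorial (q.natAbs + 1)) ^ 5 :=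
      (Nat.dvd_factorial (Int.natAbs_pos.mpr hq) (Nat.le_succ _)).trans
        (dvd_pow_self _ (by norm_num))
    exact Int.natAbs_dvd.mp (by exact_mod_cast Int.natCast_dvd_natCast.mpr h1)
  obtain ⟨hD1, hDq⟩ := Nat.sInf_mem hne
  set D := sInf Sset with hDdef
  set N := D + 1 with hNdef
  -- hDq : q ∣ (N! : ℤ)^5
  obtain ⟨c, hc⟩ := hDq
  have hNfpos : (0:ℝ) < (Nat.factorial N : ℝ) := by exact_mod_cast Nat.factorial_pos N
  have hN1fpos : (0:ℝ) < (Nat.factorial (N+1) : ℝ) := by exact_mod_cast Nat.factorial_pos (N+1)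
  have hsplit : (∑ i ∈ Finset.range N, f i) + (∑' i : ℕ, f (i + N)) = ∑' n : ℕ, f n :=
    Summable.sum_add_tsum_nat_add N hsum
  set T : ℝ := ∑' i : ℕ, f (i + N) with hTdef
  set Sp : ℝ := ∑ i ∈ Finset.range N, f i with hSpdef
  have hTsumm : Summable fun i : ℕ => f (i + N) := (summable_nat_add_iff N).mpr hsum
  -- goal RHS equals f N
  have hRHS : 1 / (Nat.factorial (D + 2) : ℝ) ^ 5 = f N := by
    simp [hfdef, hNdef]
  -- T > f N
  have hTgt : f N < T := by
    have h0 : T = f N + ∑' i : ℕ, f (i + 1 + N) := by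
      rw [hTdef, Summable.tsum_eq_zero_add hTsumm]
      simp [add_comm, add_assoc, add_left_comm]
    have hpos : 0 < ∑' i : ℕ, f (i + 1 + N) :=
      Summable.tsum_pos ((summable_nat_add_iff (N+1)).mpr hsum |>.congr (by intro i; ring_nf))
        (fun i => by positivity) 0 (by positivity)
    linarith [h0, hpos]
  -- T ≤ 2 * f N
  have hTle : T ≤ 2 * f N := by
    have hle : ∀ i : ℕ, f (i + N) ≤ f N * (1/2) ^ i := by
      intro i
      have h1 : Nat.factorial (N+1) * 2 ^ i ≤ Nat.factorial (i + N + 1) := by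
        calc Nat.factorial (N+1) * 2 ^ i ≤ Nat.factorial (N+1) * (N+2) ^ i :=
              Nat.mul_le_mul_left _ (Nat.pow_le_pow_left (by omega) i)
        _ ≤ Nat.factorial ((N+1) + i) := Nat.factorial_mul_pow_le_factorial
        _ = Nat.factorial (i + N + 1) := by ring_nf
      have h5 : (Nat.factorial (N+1) : ℝ) ^ 5 * 2 ^ i ≤ (Nat.factorial (i + N + 1) : ℝ) ^ 5 := by
        have h2 : ((Nat.factorial (N+1) : ℝ) * 2 ^ i) ^ 5 ≤ (Nat.factorial (i + N + 1) : ℝ) ^ 5 := by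
          apply pow_le_pow_left₀ (by positivity)
          exact_mod_cast h1
        have h3 : (Nat.factorial (N+1) : ℝ) ^ 5 * 2 ^ i ≤ ((Nat.factorial (N+1) : ℝ) * 2 ^ i) ^ 5 := by
          rw [mul_pow, ← pow_mul]
          have : (2:ℝ) ^ i ≤ (2:ℝ) ^ (i * 5) :=
            pow_le_pow_right₀ (by norm_num) (by omega)
          nlinarith [pow_pos (show (0:ℝ) < (Nat.factorial (N+1) : ℝ) from hN1fpos) 5]
        linarith
      show (1 : ℝ) / (Nat.factorial (i + N + 1) : ℝ) ^ 5 ≤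
        (1 : ℝ) / (Nat.factorial (N + 1) : ℝ) ^ 5 * (1/2) ^ i
      have hrw : (1 : ℝ) / (Nat.factorial (N + 1) : ℝ) ^ 5 * (1/2) ^ i
          = 1 / ((Nat.factorial (N + 1) : ℝ) ^ 5 * 2 ^ i) := by
        rw [div_pow, div_mul_div_comm]
        norm_num
      rw [hrw]
      exact one_div_le_one_div_of_le (by positivity) h5
    have := Summable.tsum_le_tsum hle hTsumm ((summable_geometric_of_lt_one (r := (1:ℝ)/2)
      (by norm_num) (by norm_num)).mul_left (f N))
    rw [tsum_mul_left, tsum_geometric_two] at this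
    linarith [this]
  -- integrality
  have hqR : (q : ℝ) ≠ 0 := Int.cast_ne_zero.mpr hq
  set M : ℤ := (∑ i ∈ Finset.range N, ((Nat.factorial N / Nat.factorial (i+1)) ^ 5 : ℕ) : ℤ)
      - p * c with hMdef
  have hkey : (Nat.factorial N : ℝ) ^ 5 * (Sp - (p:ℝ)/q) = (M : ℝ) := by
    have h1 : (Nat.factorial N : ℝ) ^ 5 * Sp
        = ∑ i ∈ Finset.range N, ((Nat.factorial N / Nat.factorial (i+1) : ℕ) : ℝ) ^ 5 := by
      rw [hSpdef, Finset.mul_sum]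
      apply Finset.sum_congr rfl
      intro i hi
      have hdvd : Nat.factorial (i+1) ∣ Nat.factorial N :=
        Nat.factorial_dvd_factorial (by simp at hi; omega)
      have hcast : ((Nat.factorial N / Nat.factorial (i+1) : ℕ) : ℝ)
          = (Nat.factorial N : ℝ) / (Nat.factorial (i+1) : ℝ) := by
        rw [Nat.cast_div hdvd (by exact_mod_cast (Nat.factorial_pos (i+1)).ne')]
      simp only [hfdef]
      rw [hcast, div_pow]
      field_simp
    have h2 : (Nat.factorial N : ℝ) ^ 5 * ((p:ℝ)/q) = (p : ℝ) * c := by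
      have h := congrArg (fun z : ℤ => (z : ℝ)) hc
      push_cast at h
      rw [h]
      field_simp
    rw [mul_sub, h1, h2, hMdef]
    simp only [Int.cast_sub, Int.cast_mul, Int.cast_sum, Int.cast_natCast, Nat.cast_pow,
      Int.cast_pow]
  rw [show (∑' n : ℕ, f n) = Sp + T from hsplit.symm, hRHS]
  by_cases hM : M = 0
  · have hfNpos : (0:ℝ) < f N := by
      show (0:ℝ) < 1 / (Nat.factorial (N+1) : ℝ) ^ 5
      positivity
    have hTpos : (0:ℝ) < T := hfNpos.trans hTgt
    have h0 : (Nat.factorial N : ℝ) ^ 5 * (Sp - (p:ℝ)/q) = 0 := by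
      rw [hkey, hM]; simp
    have hzero : Sp - (p:ℝ)/q = 0 :=
      (mul_eq_zero.mp h0).resolve_left (by positivity)
    have heq : Sp + T - (p:ℝ)/q = T := by linarith
    rw [heq, abs_of_pos hTpos]
    exact hTgt
  · have hM1 : (1:ℝ) ≤ |(M:ℝ)| := by
      have : (1:ℤ) ≤ |M| := Int.one_le_abs (by exact hM)
      exact_mod_cast this
    have habs : 1 / (Nat.factorial N : ℝ) ^ 5 ≤ |Sp - (p:ℝ)/q| := by
      rw [div_le_iff₀ (by positivity)]
      calc (1:ℝ) ≤ |(M:ℝ)| := hM1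
      _ = |(Nat.factorial N : ℝ) ^ 5 * (Sp - (p:ℝ)/q)| := by rw [hkey]
      _ = |Sp - (p:ℝ)/q| * (Nat.factorial N : ℝ) ^ 5 := by
          rw [abs_mul, abs_of_pos (by positivity), mul_comm]
    -- final estimate
    have hfac : (Nat.factorial (N+1) : ℝ) = (N+1 : ℝ) * (Nat.factorial N : ℝ) := by
      exact_mod_cast Nat.factorial_succ N
    have hN2 : (2:ℕ) ≤ N := by omega
    have hkey2 : (3:ℝ) * (Nat.factorial N : ℝ) ^ 5 < (Nat.factorial (N+1) : ℝ) ^ 5 := by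
      rw [hfac, mul_pow]
      have hN1 : (3:ℝ) ≤ (N+1:ℝ) := by exact_mod_cast (by omega : (3:ℕ) ≤ N + 1)
      have h35 : (3:ℝ)^5 ≤ ((N:ℝ)+1)^5 := pow_le_pow_left₀ (by norm_num) hN1 5
      nlinarith [pow_pos hNfpos 5, h35]
    have hfN : f N = 1 / (Nat.factorial (N+1) : ℝ) ^ 5 := by simp [hfdef]
    have hTriangle : |Sp - (p:ℝ)/q| - T ≤ |Sp + T - (p:ℝ)/q| := by
      have := abs_sub_abs_le_abs_sub (Sp - (p:ℝ)/q) (-T)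
      have hTnn : (0:ℝ) ≤ T := le_of_lt (lt_trans (by positivity) hTgt)
      rw [abs_neg, abs_of_nonneg hTnn] at this
      calc |Sp - (p:ℝ)/q| - T ≤ |Sp - (p:ℝ)/q - -T| := this
      _ = |Sp + T - (p:ℝ)/q| := by ring_nf
    have hlast : f N < 1 / (Nat.factorial N : ℝ) ^ 5 - 2 * f N := by
      rw [hfN]
      have h1 : (3:ℝ) / (Nat.factorial (N+1) : ℝ)^5 < 1 / (Nat.factorial N : ℝ)^5 := by
        rw [div_lt_div_iff₀ (by positivity) (by positivity)]
        nlinarith [hkey2]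
      have h2 : (3:ℝ) / (Nat.factorial (N+1) : ℝ)^5
          = 3 * (1 / (Nat.factorial (N+1) : ℝ)^5) := by ring
      linarith
    calc f N < 1 / (Nat.factorial N : ℝ) ^ 5 - 2 * f N := hlast
    _ ≤ |Sp - (p:ℝ)/q| - T := by linarith [habs, hTle]
    _ ≤ |Sp + T - (p:ℝ)/q| := hTriangle
end
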